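/- Let f : R^d → [0,1] be measurable with 0 ≤ f ≤ 1 everywhere, with ∫ f(v) dv = 1 and ∫ f(v) v dv = 0. Let B_R be the ball centered at the origin with volume 1 and χ its indicator function. Then ∫ f(v) |v|^2 dv ≥ ∫ χ(v) |v|^2 dv, i.e., among functions with values in [0,1], unit mass, and zero momentum, the indicator of the centered ball of volume one minimizes the second moment. -/

import Mathlib

open MeasureTheory

/-- Among functions with values in `[0,1]`, unit mass and zero momentum, the
indicator of the centered ball of volume one minimizes the second moment. -/
theorem indicator_minimizes_second_moment (d : ℕ) (hd : 1 ≤ d)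
    (f : EuclideanSpace ℝ (Fin d) → ℝ) (hmeas : Measurable f)
    (h0 : ∀ v, 0 ≤ f v) (h1 : ∀ v, f v ≤ 1)
    (hint : Integrable f) (hmass : ∫ v, f v = 1)
    (hmom : ∫ v, f v • v = (0 : EuclideanSpace ℝ (Fin d)))
    (hE : Integrable (fun v => f v * ‖v‖ ^ 2))
    (R : ℝ) (hR : volume (Metric.ball (0 : EuclideanSpace ℝ (Fin d)) R) = 1) :
    (∫ v, (Metric.ball (0 : EuclideanSpace ℝ (Fin d)) R).indicator
        (fun _ => (1:ℝ)) v * ‖v‖ ^ 2)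
      ≤ ∫ v, f v * ‖v‖ ^ 2 := by
  set B := Metric.ball (0 : EuclideanSpace ℝ (Fin d)) R with hB
  have hBm : MeasurableSet B := measurableSet_ball
  set g : EuclideanSpace ℝ (Fin d) → ℝ := B.indicator (fun _ => 1) with hg
  have hgint : Integrable g := by
    rw [hg, integrable_indicator_iff hBm]
    exact integrableOn_const (by rw [hR]; exact ENNReal.one_ne_top) (by simp)
  have hgmass : ∫ v, g v = 1 := by
    rw [hg, integral_indicator_const _ hBm]
    simp [measureReal_def, hR]
  have hgn : Integrable (fun v => g v * ‖v‖ ^ 2) := by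
    have heq : (fun v => g v * ‖v‖ ^ 2)
        = B.indicator (fun v : EuclideanSpace ℝ (Fin d) => ‖v‖ ^ 2) := by
      ext v; rw [hg]; unfold Set.indicator; split <;> simp
    rw [heq, integrable_indicator_iff hBm]
    have hc : IntegrableOn (fun v : EuclideanSpace ℝ (Fin d) => ‖v‖ ^ 2)
        (Metric.closedBall 0 R) :=
      (continuous_norm.pow 2).continuousOn.integrableOn_compact
        (isCompact_closedBall _ _)
    exact hc.mono_set Metric.ball_subset_closedBall
  have key : ∀ v, 0 ≤ (f v - g v) * (‖v‖ ^ 2 - R ^ 2) := by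
    intro v
    by_cases hv : v ∈ B
    · have h1' : f v - g v ≤ 0 := by
        rw [hg, Set.indicator_of_mem hv]; linarith [h1 v]
      have h2' : ‖v‖ ^ 2 - R ^ 2 ≤ 0 := by
        have := mem_ball_zero_iff.1 hv
        nlinarith [norm_nonneg v]
      nlinarith
    · have h1' : 0 ≤ f v - g v := by
        rw [hg, Set.indicator_of_notMem hv]; linarith [h0 v]
      have hR0 : 0 < R := by
        by_contra h
        push_neg at h
        rw [hB, Metric.ball_eq_empty.2 h] at hR
        simp at hR
      have h2' : 0 ≤ ‖v‖ ^ 2 - R ^ 2 := by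
        have hRle : R ≤ ‖v‖ := by
          by_contra hlt; push_neg at hlt
          exact hv (mem_ball_zero_iff.2 hlt)
        nlinarith [norm_nonneg v]
      exact mul_nonneg h1' h2'
  have hpos : 0 ≤ ∫ v, (f v - g v) * (‖v‖ ^ 2 - R ^ 2) := integral_nonneg key
  have hexpand : ∫ v, (f v - g v) * (‖v‖ ^ 2 - R ^ 2)
      = (∫ v, f v * ‖v‖ ^ 2) - (∫ v, g v * ‖v‖ ^ 2)
        - R ^ 2 * ((∫ v, f v) - (∫ v, g v)) := by
    have h1i : Integrable (fun v => f v * ‖v‖ ^ 2 - g v * ‖v‖ ^ 2) := hE.sub hgn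
    have h2i : Integrable (fun v => f v * R ^ 2 - g v * R ^ 2) :=
      (hint.mul_const _).sub (hgint.mul_const _)
    have heq : (fun v : EuclideanSpace ℝ (Fin d) => (f v - g v) * (‖v‖ ^ 2 - R ^ 2))
        = fun v => (f v * ‖v‖ ^ 2 - g v * ‖v‖ ^ 2) - (f v * R ^ 2 - g v * R ^ 2) := by
      ext v; ring
    rw [heq, integral_sub h1i h2i, integral_sub hE hgn,
        integral_sub (hint.mul_const _) (hgint.mul_const _),
        integral_mul_const, integral_mul_const]
    ring
  rw [hexpand, hmass, hgmass] at hpos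
  linarith
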